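/- Let R be a discrete valuation ring with maximal ideal m, and let u, v ∈ R[x] be polynomials with uv = a for some constant a ∈ R. If v ≡ x^r mod m·R[x] for some r > 0 (i.e., the reduction of v modulo m is x^r with r positive), then u = 0 and a = 0. -/

import Mathlib

open Polynomial

namespace Polynomial

theorem le_natDegree_of_map_eq_X_pow {R S : Type*} [Semiring R] [Semiring S] [Nontrivial S]
    {f : R →+* S} {v : R[X]} {r : ℕ} (hv : v.map f = X ^ r) : r ≤ v.natDegree := by
  simpa only [hv, natDegree_X_pow] using natDegree_map_le (f := f) (p := v)

theorem eq_zero_of_mul_eq_C_of_natDegree_pos {R : Type*} [Semiring R] [NoZeroDivisors R]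
    {u v : R[X]} {a : R} (huv : u * v = C a) (hv : 0 < v.natDegree) : u = 0 := by
  by_contra hu
  have hv0 : v ≠ 0 := ne_zero_of_natDegree_gt hv
  have hdeg := natDegree_mul hu hv0
  rw [huv, natDegree_C] at hdeg
  omega

end Polynomial

/-- Let `R` be a discrete valuation ring and `u, v ∈ R[x]` with `u * v = C a` a
constant. If the reduction of `v` modulo the maximal ideal is `x^r` with `r > 0`,
then `u = 0` and `a = 0`. -/
theorem stmt_1 {R : Type*} [CommRing R] [IsDomain R] [IsDiscreteValuationRing R]
    (u v : Polynomial R) (a : R) (huv : u * v = Polynomial.C a)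
    (r : ℕ) (hr : 0 < r)
    (hv : v.map (IsLocalRing.residue R) = Polynomial.X ^ r) :
    u = 0 ∧ a = 0 := by
  have hu : u = 0 :=
    eq_zero_of_mul_eq_C_of_natDegree_pos huv (hr.trans_le (le_natDegree_of_map_eq_X_pow hv))
  refine ⟨hu, ?_⟩
  rwa [hu, zero_mul, eq_comm, C_eq_zero] at huv
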